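/- arXiv:math/0010041 — 3 statements merged into one kernel-verified Lean document; each statement's English description precedes it below -/
import Mathlib

section
/- For every φ ∈ D_q there exist an integer n > 0 and integers a_1, …, a_n such that the iterated twisted commutator [⋯[[φ, λ_x]_{a_1}, λ_x]_{a_2}, ⋯, λ_x]_{a_n} = 0, where for ψ ∈ End_k(R) and a ∈ ℤ one sets [ψ, λ_x]_a := ψ∘λ_x − q^a·λ_x∘ψ. -/
open Polynomial

noncomputable section

namespace QDiff1

variable (k : Type*) [Field k]

/-- Left multiplication operator `λ_r`. -/
def lmul (r : k[X]) : Module.End k k[X] := LinearMap.mulLeft k r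

variable {k}

/-- The automorphism `σ_a`, acting on `x^b` by `q^(a*b)`. -/
def sigma (q : k) (a : ℤ) : Module.End k k[X] :=
  (aeval (C (q ^ a) * X) : k[X] →ₐ[k] k[X]).toLinearMap

/-- The operator `∂^{β^a}`, sending `x^b` to `(1 + q^a + ⋯ + q^{a(b-1)}) x^(b-1)`. -/
def dq (q : k) (a : ℤ) : Module.End k k[X] :=
  (Polynomial.basisMonomials k).constr k
    fun b => (∑ i ∈ Finset.range b, q ^ (a * (i : ℤ))) • X ^ (b - 1)

/-- `φ` is homogeneous of degree `a : ℤ`. -/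
def IsHomog (a : ℤ) (φ : Module.End k k[X]) : Prop :=
  ∀ b : ℕ, ∃ c : k, φ (X ^ b) = c • (if 0 ≤ a + (b : ℤ) then X ^ (a + (b : ℤ)).toNat else 0)

/-- `M` is closed under `φ ↦ λ_r ∘ φ ∘ λ_s`. -/
def Closed (M : Submodule k (Module.End k k[X])) : Prop :=
  ∀ r s : k[X], ∀ φ ∈ M, lmul k r * φ * lmul k s ∈ M

/-- The filtration `D_q^n` of `q`-differential operators on `k[x]`. -/
def Dq (q : k) : ℕ → Submodule k (Module.End k k[X])
  | 0 => sInf {M | Closed M ∧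
      {φ : Module.End k k[X] | ∃ a : ℤ, IsHomog a φ ∧ ∀ b : ℕ,
        φ * lmul k (X ^ b) = q ^ (a * (b : ℤ)) • (lmul k (X ^ b) * φ)} ⊆ ↑M}
  | n + 1 => sInf {M | Closed M ∧ Dq q n ≤ M ∧
      {φ : Module.End k k[X] | ∃ a : ℤ, IsHomog a φ ∧ ∀ b : ℕ,
        φ * lmul k (X ^ b) - q ^ (a * (b : ℤ)) • (lmul k (X ^ b) * φ) ∈ Dq q n} ⊆ ↑M}


/-- The a-twisted bracket with lambda_x. -/
def twBr (q : k) (psi : Module.End k k[X]) (a : ℤ) : Module.End k k[X] :=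
  psi * lmul k X - q ^ a • (lmul k X * psi)


lemma twBr_zero (q : k) (a : ℤ) : twBr q 0 a = 0 := by simp [twBr]

lemma twBr_add (q : k) (φ ψ : Module.End k k[X]) (a : ℤ) :
    twBr q (φ + ψ) a = twBr q φ a + twBr q ψ a := by
  simp only [twBr, add_mul, mul_add, smul_add]; abel

lemma twBr_smul (q : k) (c : k) (φ : Module.End k k[X]) (a : ℤ) :
    twBr q (c • φ) a = c • twBr q φ a := by
  simp only [twBr, smul_mul_assoc, mul_smul_comm, smul_sub, smul_comm c]

lemma twBr_comm' (q : k) (φ : Module.End k k[X]) (a b : ℤ) :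
    twBr q (twBr q φ a) b = twBr q (twBr q φ b) a := by
  simp only [twBr, sub_mul, mul_sub, smul_sub, smul_mul_assoc, mul_smul_comm, smul_smul,
    mul_comm (q ^ a) (q ^ b), mul_assoc]
  abel

lemma lmul_comm' (r s : k[X]) : lmul k r * lmul k s = lmul k s * lmul k r := by
  ext p; simp [lmul, mul_assoc, mul_left_comm]

lemma twBr_conj (q : k) (r s : k[X]) (φ : Module.End k k[X]) (a : ℤ) :
    twBr q (lmul k r * φ * lmul k s) a = lmul k r * twBr q φ a * lmul k s := by
  have h1 : (lmul k r * φ * lmul k s) * lmul k X = lmul k r * (φ * lmul k X) * lmul k s := by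
    rw [mul_assoc (lmul k r * φ), lmul_comm' s X, ← mul_assoc, mul_assoc (lmul k r)]
  have h2 : lmul k X * (lmul k r * φ * lmul k s) = lmul k r * (lmul k X * φ) * lmul k s := by
    rw [← mul_assoc, ← mul_assoc, lmul_comm' X r, mul_assoc (lmul k r), mul_assoc (lmul k r)]
  simp only [twBr, mul_sub, sub_mul, smul_mul_assoc, mul_smul_comm, h1, h2]

lemma foldl_twBr_zero (q : k) (L : List ℤ) : L.foldl (twBr q) 0 = 0 := by
  induction L with
  | nil => rfl
  | cons a L ih => simp [List.foldl_cons, twBr_zero, ih]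

lemma foldl_twBr_add (q : k) (φ ψ : Module.End k k[X]) (L : List ℤ) :
    L.foldl (twBr q) (φ + ψ) = L.foldl (twBr q) φ + L.foldl (twBr q) ψ := by
  induction L generalizing φ ψ with
  | nil => rfl
  | cons a L ih => simp [List.foldl_cons, twBr_add, ih]

lemma foldl_twBr_smul (q : k) (c : k) (φ : Module.End k k[X]) (L : List ℤ) :
    L.foldl (twBr q) (c • φ) = c • L.foldl (twBr q) φ := by
  induction L generalizing φ with
  | nil => rfl
  | cons a L ih => simp [List.foldl_cons, twBr_smul, ih]

lemma foldl_twBr_swap (q : k) (φ : Module.End k k[X]) (a : ℤ) (L : List ℤ) :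
    L.foldl (twBr q) (twBr q φ a) = twBr q (L.foldl (twBr q) φ) a := by
  induction L generalizing φ with
  | nil => rfl
  | cons b L ih => rw [List.foldl_cons, List.foldl_cons, twBr_comm', ih]

lemma foldl_foldl_twBr_comm (q : k) (φ : Module.End k k[X]) (L1 L2 : List ℤ) :
    L2.foldl (twBr q) (L1.foldl (twBr q) φ) = L1.foldl (twBr q) (L2.foldl (twBr q) φ) := by
  induction L1 generalizing φ with
  | nil => rfl
  | cons a L ih => rw [List.foldl_cons, ih, List.foldl_cons, foldl_twBr_swap]

lemma foldl_twBr_conj (q : k) (r s : k[X]) (φ : Module.End k k[X]) (L : List ℤ) :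
    L.foldl (twBr q) (lmul k r * φ * lmul k s) = lmul k r * L.foldl (twBr q) φ * lmul k s := by
  induction L generalizing φ with
  | nil => rfl
  | cons a L ih => rw [List.foldl_cons, List.foldl_cons, twBr_conj, ih]

/-- The submodule of endomorphisms killed by some nonempty iterated twisted bracket. -/
def Sm (q : k) : Submodule k (Module.End k k[X]) where
  carrier := {φ | ∃ L : List ℤ, L ≠ [] ∧ L.foldl (twBr q) φ = 0}
  zero_mem' := ⟨[0], by simp, by simpa using foldl_twBr_zero q [0]⟩
  add_mem' := by
    rintro φ ψ ⟨L1, hL1, h1⟩ ⟨L2, hL2, h2⟩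
    refine ⟨L2 ++ L1, by simp [hL2], ?_⟩
    rw [List.foldl_append, foldl_twBr_add, h2, add_zero, foldl_foldl_twBr_comm, h1,
      foldl_twBr_zero]
  smul_mem' := by
    rintro c φ ⟨L, hL, h⟩
    exact ⟨L, hL, by rw [foldl_twBr_smul, h, smul_zero]⟩

lemma Sm_closed (q : k) : Closed (Sm q) := by
  rintro r s φ ⟨L, hL, h⟩
  exact ⟨L, hL, by rw [foldl_twBr_conj, h, mul_zero, zero_mul]⟩

lemma Dq_le_Sm (q : k) : ∀ n, Dq q n ≤ Sm q := by
  intro n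
  induction n with
  | zero =>
    refine sInf_le ⟨Sm_closed q, ?_⟩
    rintro φ ⟨a, -, hcomm⟩
    refine ⟨[a], by simp, ?_⟩
    have := hcomm 1
    simp only [pow_one, Nat.cast_one, mul_one] at this
    simp [List.foldl_cons, twBr, this]
  | succ n ih =>
    refine sInf_le ⟨Sm_closed q, ih, ?_⟩
    rintro φ ⟨a, -, hcomm⟩
    have h1 := ih (hcomm 1)
    obtain ⟨L, hL, hL0⟩ := h1
    refine ⟨a :: L, by simp, ?_⟩
    rw [List.foldl_cons]
    have : twBr q φ a = φ * lmul k (X ^ 1) - q ^ (a * ((1 : ℕ) : ℤ)) • (lmul k (X ^ 1) * φ) := by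
      simp [twBr]
    rw [this]
    exact hL0

/-- Lemma L:comm: every element of D_q is killed by finitely many
iterated twisted brackets with lambda_x. -/
theorem stmt3 [CharZero k] (q : k) (hq : Transcendental ℚ q)
    (φ : Module.End k k[X]) (hφ : ∃ n : ℕ, φ ∈ Dq q n) :
    ∃ L : List ℤ, L ≠ [] ∧ L.foldl (twBr q) φ = 0 := by
  obtain ⟨n, hn⟩ := hφ
  exact Dq_le_Sm q n hn

end QDiff1
end
end

section
/- Let P be any element of the k-subalgebra of End_k(R) generated by { ∂^{β^a} : a ∈ ℤ }, and let b ∈ ℤ. Then there exists Q in the same subalgebra such that Q∘λ_x − λ_x∘Q = P∘σ_b. Consequently, for every f ∈ R one has (λ_f∘Q)∘λ_x − λ_x∘(λ_f∘Q) = λ_f∘P∘σ_b. -/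
/-!
A word of length `m` in the operators `∂^{β^a}` acts by `x^n ↦ F(n) x^(n-m)`, where `F` vanishes
below `m` and is an exponential polynomial `∑_c p_c(n) q^(cn)` with `deg p_0 ≤ m` and
`deg p_c < m` for `c ≠ 0`. Conversely every such `F` comes from the algebra: by induction on `m`,
`F` is, up to a polynomial, a combination of products `H(n) [n-m]_{q^c}` with `H` of level `m`,
and the polynomials vanishing below `m` are multiples of products of `n - i`.
The commutator with `λ_x` of `x^n ↦ G(n) x^(n-m-1)` has coefficient sequence `G(n+1) - G(n)`, so
`Q` is obtained from `G(n) = ∑_{i<n} q^(bi) F(i)`, which is of the same kind one level up because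
`q` is not a root of unity.
-/

open Polynomial

noncomputable section

namespace QDiff1

variable (k : Type*) [Field k]

variable {k}

lemma linearMap_ext_X_pow {f g : Module.End k k[X]} (h : ∀ n : ℕ, f (X ^ n) = g (X ^ n)) :
    f = g :=
  (basisMonomials k).ext fun n => by
    simpa [coe_basisMonomials, monomial_one_right_eq_X_pow] using h n

/-- The operator `x ^ n ↦ F n • x ^ (n - m)`; note that it sends `x ^ n` to `F n` when `n < m`. -/
def lowerOp (m : ℕ) : (ℕ → k) →ₗ[k] Module.End k k[X] :=
  ((basisMonomials k).constr k).toLinearMap ∘ₗ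
    LinearMap.pi fun n => (LinearMap.proj n).smulRight (X ^ (n - m))

@[simp]
lemma lowerOp_apply_X_pow (m : ℕ) (F : ℕ → k) (n : ℕ) :
    lowerOp m F (X ^ n) = F n • X ^ (n - m) := by
  have h := (basisMonomials k).constr_basis k (fun n => F n • (X ^ (n - m) : k[X])) n
  simp only [coe_basisMonomials, monomial_one_right_eq_X_pow] at h
  exact h

lemma lowerOp_zero_one : lowerOp 0 (1 : ℕ → k) = 1 :=
  linearMap_ext_X_pow fun n => by simp

lemma lowerOp_mul_lowerOp (m m' : ℕ) (F F' : ℕ → k) :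
    lowerOp m F * lowerOp m' F' = lowerOp (m + m') (F' * fun n => F (n - m')) :=
  linearMap_ext_X_pow fun n => by
    simp only [Module.End.mul_apply, lowerOp_apply_X_pow, map_smul, smul_smul, Pi.mul_apply]
    rw [Nat.sub_sub, add_comm m' m]

/-- The `q`-integer `[N]_{q^a}`. -/
def qNum (q : k) (a : ℤ) (N : ℕ) : k := ∑ i ∈ Finset.range N, q ^ (a * i)

lemma dq_eq_lowerOp (q : k) (a : ℤ) : dq q a = lowerOp 1 (qNum q a) := rfl

lemma dq_mul_lowerOp (q : k) (a : ℤ) (m : ℕ) (F : ℕ → k) :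
    dq q a * lowerOp m F = lowerOp (m + 1) (F * fun n => qNum q a (n - m)) := by
  rw [dq_eq_lowerOp, lowerOp_mul_lowerOp, add_comm]

def expSeq (q : k) (c : ℤ) : ℕ → k := fun n => q ^ (c * n)

lemma sigma_apply_X_pow (q : k) (b : ℤ) (n : ℕ) : sigma q b (X ^ n) = expSeq q b n • X ^ n := by
  rw [sigma, AlgHom.toLinearMap_apply, map_pow, aeval_X, mul_pow, ← C_pow, expSeq, zpow_mul,
    zpow_natCast, smul_eq_C_mul]

lemma lowerOp_mul_sigma (q : k) (m : ℕ) (F : ℕ → k) (b : ℤ) :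
    lowerOp m F * sigma q b = lowerOp m (expSeq q b * F) :=
  linearMap_ext_X_pow fun n => by
    simp [sigma_apply_X_pow, smul_smul]

lemma lmul_X_apply_X_pow (n : ℕ) : lmul k X (X ^ n) = X ^ (n + 1) := by
  simp [lmul, pow_succ, mul_comm]

lemma lowerOp_succ_mul_lmul_X_sub (m : ℕ) (G : ℕ → k) (hG : ∀ n ≤ m, G n = 0) :
    lowerOp (m + 1) G * lmul k X - lmul k X * lowerOp (m + 1) G =
      lowerOp m fun n => G (n + 1) - G n :=
  linearMap_ext_X_pow fun n => by
    simp only [LinearMap.sub_apply, Module.End.mul_apply, lmul_X_apply_X_pow,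
      lowerOp_apply_X_pow, map_smul, sub_smul]
    rcases le_or_gt n m with hn | hn
    · simp [hG n hn]
    · rw [Nat.add_sub_add_right, show n - (m + 1) + 1 = n - m by omega]

lemma qNum_zero_left (q : k) (N : ℕ) : qNum q 0 N = N := by
  simp [qNum]

lemma qNum_zero_right (q : k) (a : ℤ) : qNum q a 0 = 0 := by
  simp [qNum]

lemma sub_one_mul_qNum (q : k) (a : ℤ) (N : ℕ) : (q ^ a - 1) * qNum q a N = q ^ (a * N) - 1 := by
  simp only [qNum, zpow_mul, zpow_natCast, mul_geom_sum]

def vanishingBelow (m : ℕ) : Submodule k (ℕ → k) where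
  carrier := {F | ∀ n < m, F n = 0}
  add_mem' hF hG n hn := by simp [hF n hn, hG n hn]
  zero_mem' _ _ := rfl
  smul_mem' c F hF n hn := by simp [hF n hn]

lemma mul_mem_vanishingBelow (G : ℕ → k) {m : ℕ} {F : ℕ → k} (hF : F ∈ vanishingBelow m) :
    G * F ∈ vanishingBelow m :=
  fun n hn => by simp [hF n hn]

lemma mul_qNum_mem_vanishingBelow (q : k) (a : ℤ) {m : ℕ} {F : ℕ → k}
    (hF : F ∈ vanishingBelow m) : (F * fun n => qNum q a (n - m)) ∈ vanishingBelow (m + 1) := by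
  intro n hn
  rcases Nat.lt_succ_iff_lt_or_eq.mp hn with hn | rfl
  · simp [hF n hn]
  · simp [qNum_zero_right]

/-- On sequences vanishing below `m`, the truncated subtraction in `n - m` is harmless. -/
lemma mul_qNum_zero_sub {m : ℕ} {F : ℕ → k} (hF : F ∈ vanishingBelow m) (q : k) :
    (F * fun n => qNum q 0 (n - m)) = F * fun n : ℕ => (n : k) - m := by
  ext n
  rcases lt_or_ge n m with hn | hn
  · simp [hF n hn]
  · simp [qNum_zero_left, Nat.cast_sub hn]

lemma mul_qNum_sub {m : ℕ} {F : ℕ → k} (hF : F ∈ vanishingBelow m) {q : k} (hq0 : q ≠ 0)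
    (a : ℤ) : ((q ^ a - 1) * q ^ (a * m)) • (F * fun n => qNum q a (n - m)) =
      F * fun n : ℕ => q ^ (a * n) - q ^ (a * m) := by
  ext n
  rcases lt_or_ge n m with hn | hn
  · simp [hF n hn]
  · have h := sub_one_mul_qNum q a (n - m)
    rw [Nat.cast_sub hn, mul_sub, zpow_sub₀ hq0] at h
    have hm : q ^ (a * m) ≠ 0 := zpow_ne_zero _ hq0
    simp only [Pi.smul_apply, Pi.mul_apply, smul_eq_mul]
    field_simp at h
    linear_combination F n * h

abbrev qDiffAlg (q : k) : Subalgebra k (Module.End k k[X]) := Algebra.adjoin k (Set.range (dq q))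

def realizable (q : k) (m : ℕ) : Submodule k (ℕ → k) :=
  vanishingBelow m ⊓ (qDiffAlg q).toSubmodule.comap (lowerOp m)

lemma one_mem_realizable_zero (q : k) : (1 : ℕ → k) ∈ realizable q 0 :=
  ⟨fun _ h => absurd h (Nat.not_lt_zero _), by simp [lowerOp_zero_one]⟩

lemma mul_qNum_mem_realizable {q : k} (a : ℤ) {m : ℕ} {F : ℕ → k} (hF : F ∈ realizable q m) :
    (F * fun n => qNum q a (n - m)) ∈ realizable q (m + 1) := by
  refine ⟨mul_qNum_mem_vanishingBelow q a hF.1, ?_⟩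
  show lowerOp (m + 1) _ ∈ qDiffAlg q
  rw [← dq_mul_lowerOp]
  exact mul_mem (Algebra.subset_adjoin ⟨a, rfl⟩) hF.2

lemma mul_sub_natCast_mem_realizable {q : k} {m : ℕ} {F : ℕ → k} (hF : F ∈ realizable q m) :
    (F * fun n : ℕ => (n : k) - m) ∈ realizable q (m + 1) := by
  rw [← mul_qNum_zero_sub hF.1 q]
  exact mul_qNum_mem_realizable 0 hF

lemma mul_zpow_sub_mem_realizable {q : k} (hq0 : q ≠ 0) (a : ℤ) {m : ℕ} {F : ℕ → k}
    (hF : F ∈ realizable q m) :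
    (F * fun n : ℕ => q ^ (a * n) - q ^ (a * m)) ∈ realizable q (m + 1) := by
  rw [← mul_qNum_sub hF.1 hq0]
  exact Submodule.smul_mem _ _ (mul_qNum_mem_realizable a hF)

def evalNat : k[X] →ₗ[k] (ℕ → k) := LinearMap.pi fun n => leval (n : k)

@[simp]
lemma evalNat_apply (p : k[X]) (n : ℕ) : evalNat p n = p.eval (n : k) := rfl

/-- Sequences given by a polynomial of degree at most `d`. -/
def polyFun (d : ℕ) : Submodule k (ℕ → k) := (degreeLT k (d + 1)).map evalNat

lemma exists_eq_X_sub_C_mul {d : ℕ} {p : k[X]} (hp : p ∈ degreeLT k (d + 1)) {a : k}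
    (ha : p.eval a = 0) : ∃ s ∈ degreeLT k d, p = (X - C a) * s := by
  refine ⟨p /ₘ (X - C a), ?_, (mul_divByMonic_eq_iff_isRoot.mpr ha).symm⟩
  rw [mem_degreeLT] at hp ⊢
  rw [← mul_divByMonic_eq_iff_isRoot.mpr ha, degree_mul, degree_X_sub_C] at hp
  by_cases hs : p /ₘ (X - C a) = 0
  · simp [hs]
  · rw [degree_eq_natDegree hs] at hp ⊢
    have : 1 + (p /ₘ (X - C a)).natDegree < d + 1 := by exact_mod_cast hp
    exact_mod_cast (by omega : (p /ₘ (X - C a)).natDegree < d)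

lemma mem_degreeLT_succ_iff {p : k[X]} {d : ℕ} : p ∈ degreeLT k (d + 1) ↔ p.natDegree ≤ d := by
  rw [degreeLT_succ_eq_degreeLE, mem_degreeLE, natDegree_le_iff_degree_le]

lemma evalNat_descPochhammer_mem_realizable (q : k) (m : ℕ) :
    evalNat (descPochhammer k m) ∈ realizable q m := by
  induction m with
  | zero =>
    convert one_mem_realizable_zero q
    ext n
    simp
  | succ m ih =>
    convert mul_sub_natCast_mem_realizable ih using 1
    ext n
    simp [descPochhammer_succ_eval]

lemma polyFun_inf_vanishingBelow_le [CharZero k] (q : k) (m : ℕ) :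
    polyFun m ⊓ vanishingBelow m ≤ realizable q m := by
  induction m with
  | zero =>
    rintro _ ⟨⟨p, hp, rfl⟩, -⟩
    have hp0 : p.degree ≤ 0 := Nat.WithBot.lt_one_iff_le_zero.mp (mem_degreeLT.mp hp)
    have hC : evalNat p = p.coeff 0 • (1 : ℕ → k) := by
      ext n; rw [eq_C_of_degree_le_zero hp0]; simp
    rw [hC]
    exact Submodule.smul_mem _ _ (one_mem_realizable_zero q)
  | succ m ih =>
    rintro _ ⟨⟨p, hp, rfl⟩, hvan⟩
    obtain ⟨s, hs, rfl⟩ := exists_eq_X_sub_C_mul hp (hvan m (Nat.lt_succ_self m))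
    have hs_van : evalNat s ∈ vanishingBelow m := fun n hn => by
      have h := hvan n (Nat.lt_succ_of_lt hn)
      have hnm : (n : k) - m ≠ 0 := sub_ne_zero.mpr (Nat.cast_injective.ne hn.ne)
      simpa [hnm] using h
    convert mul_sub_natCast_mem_realizable (ih ⟨⟨s, hs, rfl⟩, hs_van⟩) using 1
    ext n
    simp [mul_comm]

def expMono (q : k) (c : ℤ) (j : ℕ) : ℕ → k := fun n => (n : k) ^ j * q ^ (c * n)

/-- Exponential polynomials `∑_c p_c(n) q^(c n)` with `deg p_0 ≤ m` and `deg p_c < m` for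
`c ≠ 0`. Those vanishing below `m` are exactly the coefficient sequences of the part of degree `-m`
of the algebra. -/
def expPolySpace (q : k) (m : ℕ) : Submodule k (ℕ → k) :=
  Submodule.span k {f | ∃ c j, j ≤ m ∧ (c ≠ 0 → j < m) ∧ expMono q c j = f}

lemma expMono_mem_expPolySpace (q : k) {c : ℤ} {j m : ℕ} (hj : j ≤ m) (hc : c ≠ 0 → j < m) :
    expMono q c j ∈ expPolySpace q m :=
  Submodule.subset_span ⟨c, j, hj, hc, rfl⟩

lemma expPolySpace_le {q : k} {m : ℕ} {M : Submodule k (ℕ → k)}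
    (h : ∀ c j, j ≤ m → (c ≠ 0 → j < m) → expMono q c j ∈ M) : expPolySpace q m ≤ M :=
  Submodule.span_le.mpr fun _ ⟨c, j, hj, hc, hf⟩ => hf ▸ h c j hj hc

lemma expPolySpace_mono (q : k) {m m' : ℕ} (h : m ≤ m') : expPolySpace q m ≤ expPolySpace q m' :=
  Submodule.span_mono fun _ ⟨c, j, hj, hc, hf⟩ =>
    ⟨c, j, hj.trans h, fun hc' => (hc hc').trans_le h, hf⟩

lemma one_mem_expPolySpace (q : k) (m : ℕ) : (1 : ℕ → k) ∈ expPolySpace q m := by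
  convert expMono_mem_expPolySpace q (c := 0) (Nat.zero_le m) (absurd rfl)
  ext n; simp [expMono]

lemma mul_sub_mem_expPolySpace {q : k} {m : ℕ} {F : ℕ → k} (hF : F ∈ expPolySpace q m) (a : k) :
    (F * fun n : ℕ => (n : k) - a) ∈ expPolySpace q (m + 1) := by
  refine expPolySpace_le (M := (expPolySpace q (m + 1)).comap
    (LinearMap.mulRight k fun n : ℕ => (n : k) - a)) (fun c j hj hc => ?_) hF
  have h : expMono q c j * (fun n : ℕ => (n : k) - a) =
      expMono q c (j + 1) - a • expMono q c j := by
    ext n; simp only [expMono, Pi.mul_apply, Pi.sub_apply, Pi.smul_apply, smul_eq_mul]; ring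
  simp only [Submodule.mem_comap, LinearMap.mulRight_apply, h]
  exact Submodule.sub_mem _ (expMono_mem_expPolySpace q (by omega) fun h => by have := hc h; omega)
    (Submodule.smul_mem _ _ (expMono_mem_expPolySpace q (by omega) fun _ => by omega))

lemma expSeq_mul_expMono {q : k} (hq0 : q ≠ 0) (b c : ℤ) (j : ℕ) :
    expSeq q b * expMono q c j = expMono q (b + c) j := by
  ext n; simp only [expSeq, expMono, Pi.mul_apply, add_mul, zpow_add₀ hq0]; ring

lemma expSeq_mul_mem_expPolySpace {q : k} (hq0 : q ≠ 0) (b : ℤ) {m : ℕ} {F : ℕ → k}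
    (hF : F ∈ expPolySpace q m) : expSeq q b * F ∈ expPolySpace q (m + 1) := by
  refine expPolySpace_le (M := (expPolySpace q (m + 1)).comap (LinearMap.mulLeft k (expSeq q b)))
    (fun c j hj _ => ?_) hF
  rw [Submodule.mem_comap, LinearMap.mulLeft_apply, expSeq_mul_expMono hq0]
  exact expMono_mem_expPolySpace q (by omega) fun _ => by omega

lemma evalNat_mul_expSeq_mem_expPolySpace (q : k) (c : ℤ) {m : ℕ} {s : k[X]}
    (hs : s ∈ degreeLT k m) : evalNat s * expSeq q c ∈ expPolySpace q m := by
  classical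
  rw [degreeLT_eq_span_X_pow] at hs
  have h := Submodule.mem_map_of_mem (f := (LinearMap.mulRight k (expSeq q c)) ∘ₗ evalNat) hs
  rw [Submodule.map_span] at h
  refine Submodule.span_le.mpr ?_ h
  rintro _ ⟨_, hx, rfl⟩
  obtain ⟨i, hi, rfl⟩ := Finset.mem_image.mp hx
  rw [Finset.mem_range] at hi
  rw [SetLike.mem_coe]
  convert expMono_mem_expPolySpace q (c := c) hi.le fun _ => hi using 1
  ext n; simp [expMono, expSeq]

def partialSum : (ℕ → k) →ₗ[k] (ℕ → k) where
  toFun F n := ∑ i ∈ Finset.range n, F i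
  map_add' F G := by ext n; simp [Finset.sum_add_distrib]
  map_smul' c F := by ext n; simp [Finset.mul_sum]

@[simp]
lemma partialSum_apply (F : ℕ → k) (n : ℕ) : partialSum F n = ∑ i ∈ Finset.range n, F i := rfl

lemma partialSum_sub_shift (F : ℕ → k) :
    partialSum (fun n => F (n + 1) - F n) = F - F 0 • 1 := by
  ext n
  rw [partialSum_apply, Finset.sum_range_sub]
  simp

lemma partialSum_expMono_zero_mem [CharZero k] (q : k) (j : ℕ) :
    partialSum (expMono q 0 j) ∈ expPolySpace q (j + 1) := by
  have faulhaber : partialSum (expMono q 0 j) = ∑ i ∈ Finset.range (j + 1),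
      ((_root_.bernoulli i * (j + 1).choose i / (j + 1) : ℚ) : k) • expMono q 0 (j + 1 - i) := by
    ext n
    have h := congrArg (Rat.cast : ℚ → k) (sum_range_pow n j)
    push_cast at h
    simp only [partialSum_apply, expMono, zero_mul, zpow_zero, mul_one, Finset.sum_apply,
      Pi.smul_apply, smul_eq_mul, h]
    refine Finset.sum_congr rfl fun i _ => ?_
    push_cast; ring
  rw [faulhaber]
  exact Submodule.sum_mem _ fun i _ =>
    Submodule.smul_mem _ _ (expMono_mem_expPolySpace q (by omega) (absurd rfl))

lemma expMono_succ_sub {q : k} (hq0 : q ≠ 0) (d : ℤ) (j : ℕ) :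
    (fun n => expMono q d j (n + 1) - expMono q d j n) =
      (q ^ d - 1) • expMono q d j +
        q ^ d • ∑ i ∈ Finset.range j, (j.choose i : k) • expMono q d i := by
  ext n
  have hbinom : ((n : k) + 1) ^ j = ∑ i ∈ Finset.range j, (j.choose i : k) * (n : k) ^ i +
      (n : k) ^ j := by
    rw [add_pow, Finset.sum_range_succ]
    simp [mul_comm]
  have hsum : ∑ i ∈ Finset.range j, (j.choose i : k) * ((n : k) ^ i * q ^ (d * n)) =
      (∑ i ∈ Finset.range j, (j.choose i : k) * (n : k) ^ i) * q ^ (d * n) := by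
    rw [Finset.sum_mul]
    exact Finset.sum_congr rfl fun i _ => by ring
  simp only [expMono, Pi.add_apply, Pi.smul_apply, Finset.sum_apply, smul_eq_mul]
  rw [Nat.cast_succ, hbinom, hsum, Nat.cast_succ, mul_add, mul_one, zpow_add₀ hq0]
  ring

lemma partialSum_expMono_mem [CharZero k] {q : k} (hq0 : q ≠ 0)
    (hq : ∀ c : ℤ, c ≠ 0 → q ^ c ≠ 1) (d : ℤ) (j : ℕ) :
    partialSum (expMono q d j) ∈ expPolySpace q (j + 1) := by
  rcases eq_or_ne d 0 with rfl | hd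
  · exact partialSum_expMono_zero_mem q j
  induction j using Nat.strong_induction_on with
  | _ j ih =>
    have key := congrArg partialSum (expMono_succ_sub hq0 d j)
    rw [partialSum_sub_shift, map_add, map_smul, map_smul, map_sum] at key
    have hsolve : partialSum (expMono q d j) = (q ^ d - 1)⁻¹ • (expMono q d j -
        expMono q d j 0 • 1 - q ^ d • ∑ i ∈ Finset.range j,
          partialSum ((j.choose i : k) • expMono q d i)) := by
      rw [key, eq_inv_smul_iff₀ (sub_ne_zero.mpr (hq d hd))]
      abel
    rw [hsolve]
    refine Submodule.smul_mem _ _ (Submodule.sub_mem _ (Submodule.sub_mem _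
      (expMono_mem_expPolySpace q (by omega) fun _ => by omega)
      (Submodule.smul_mem _ _ (one_mem_expPolySpace q _)))
      (Submodule.smul_mem _ _ (Submodule.sum_mem _ fun i hi => ?_)))
    have hij := Finset.mem_range.mp hi
    rw [map_smul]
    exact Submodule.smul_mem _ _ (expPolySpace_mono q (by omega) (ih i hij))

lemma partialSum_expSeq_mul_mem_expPolySpace [CharZero k] {q : k} (hq0 : q ≠ 0)
    (hq : ∀ c : ℤ, c ≠ 0 → q ^ c ≠ 1) (b : ℤ) {m : ℕ} {F : ℕ → k}
    (hF : F ∈ expPolySpace q m) : partialSum (expSeq q b * F) ∈ expPolySpace q (m + 1) := by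
  refine expPolySpace_le (M := (expPolySpace q (m + 1)).comap
    (partialSum ∘ₗ LinearMap.mulLeft k (expSeq q b))) (fun c j hj _ => ?_) hF
  simp only [Submodule.mem_comap, LinearMap.comp_apply, LinearMap.mulLeft_apply,
    expSeq_mul_expMono hq0]
  exact expPolySpace_mono q (by omega) (partialSum_expMono_mem hq0 hq _ j)

lemma partialSum_mem_vanishingBelow_succ {m : ℕ} {F : ℕ → k} (hF : F ∈ vanishingBelow m) :
    partialSum F ∈ vanishingBelow (m + 1) := fun _ hn =>
  Finset.sum_eq_zero fun i hi => hF i ((Finset.mem_range.mp hi).trans_le (Nat.lt_succ_iff.mp hn))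

lemma qNum_of_zpow_eq_one {q : k} {a : ℤ} (h : q ^ a = 1) (N : ℕ) : qNum q a N = N := by
  simp [qNum, zpow_mul, h]

lemma mul_qNum_mem_expPolySpace {q : k} (hq0 : q ≠ 0) (a : ℤ) {m : ℕ} {F : ℕ → k}
    (hF : F ∈ expPolySpace q m ⊓ vanishingBelow m) :
    (F * fun n => qNum q a (n - m)) ∈ expPolySpace q (m + 1) := by
  by_cases ha : q ^ a = 1
  · have h : (F * fun n => qNum q a (n - m)) = F * fun n => qNum q 0 (n - m) := by
      ext n; simp [qNum_of_zpow_eq_one ha, qNum_zero_left]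
    rw [h, mul_qNum_zero_sub hF.2]
    exact mul_sub_mem_expPolySpace hF.1 _
  · have hunit : (q ^ a - 1) * q ^ (a * m) ≠ 0 :=
      mul_ne_zero (sub_ne_zero.mpr ha) (zpow_ne_zero _ hq0)
    rw [← inv_smul_smul₀ hunit (F * _), mul_qNum_sub hF.2 hq0]
    have h : (F * fun n : ℕ => q ^ (a * n) - q ^ (a * m)) =
        expSeq q a * F - q ^ (a * m) • F := by
      ext n; simp only [expSeq, Pi.mul_apply, Pi.sub_apply, Pi.smul_apply, smul_eq_mul]; ring
    rw [h]
    exact Submodule.smul_mem _ _ (Submodule.sub_mem _ (expSeq_mul_mem_expPolySpace hq0 a hF.1)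
      (Submodule.smul_mem _ _ (expPolySpace_mono q (Nat.le_succ m) hF.1)))

lemma evalNat_mul_expSeq_mem_realizable_sup_polyFun [CharZero k] {q : k} (hq0 : q ≠ 0) (c : ℤ)
    {m : ℕ} (ih : expPolySpace q m ≤ realizable q m ⊔ polyFun m) {r : k[X]}
    (hr : r ∈ degreeLT k (m + 1)) :
    evalNat r * expSeq q c ∈ realizable q (m + 1) ⊔ polyFun (m + 1) := by
  set h := descPochhammer k m
  have hh_deg : h ∈ degreeLT k (m + 1) :=
    mem_degreeLT_succ_iff.mpr (descPochhammer_natDegree k m).le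
  have hh_m : h.eval (m : k) ≠ 0 := by
    rw [descPochhammer_eval_eq_descFactorial, Nat.descFactorial_self]
    exact_mod_cast m.factorial_ne_zero
  -- Write `r = (X - m) s + l h` with `h` the falling factorial; then `s q^(cn)` splits by `ih`,
  -- and `h(n) q^(cn) = h(n) (q^(cn) - q^(cm)) + q^(cm) h(n)`.
  set l := r.eval (m : k) / h.eval (m : k)
  obtain ⟨s, hs, hrs⟩ := exists_eq_X_sub_C_mul (a := (m : k))
    (Submodule.sub_mem _ hr (Submodule.smul_mem _ l hh_deg))
    (by simp only [eval_sub, eval_smul, smul_eq_mul, l, div_mul_cancel₀ _ hh_m, sub_self])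
  obtain ⟨H, hH, _, ⟨t, ht, rfl⟩, hHt⟩ :=
    Submodule.mem_sup.mp (ih (evalNat_mul_expSeq_mem_expPolySpace q c hs))
  refine Submodule.mem_sup.mpr ⟨H * (fun n : ℕ => (n : k) - m) +
      l • (evalNat h * fun n : ℕ => q ^ (c * n) - q ^ (c * m)),
    Submodule.add_mem _ (mul_sub_natCast_mem_realizable hH)
      (Submodule.smul_mem _ _ (mul_zpow_sub_mem_realizable hq0 c
        (evalNat_descPochhammer_mem_realizable q m))),
    evalNat ((X - C (m : k)) * t + (l * q ^ (c * m)) • h), ⟨_, ?_, rfl⟩, ?_⟩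
  · refine Submodule.add_mem _ (mem_degreeLT_succ_iff.mpr ?_)
      (Submodule.smul_mem _ _ (degreeLT_mono (Nat.le_succ _) hh_deg))
    have := mem_degreeLT_succ_iff.mp ht
    exact (natDegree_mul_le).trans (by rw [natDegree_X_sub_C]; omega)
  · ext n
    have hr_n := congrArg (eval (n : k)) hrs
    have hHt_n := congrFun hHt n
    simp only [eval_sub, eval_smul, eval_mul, eval_X, eval_C, smul_eq_mul] at hr_n
    simp only [Pi.add_apply, Pi.mul_apply, Pi.smul_apply, evalNat_apply, expSeq, smul_eq_mul,
      eval_add, eval_mul, eval_sub, eval_X, eval_C, eval_smul] at hHt_n ⊢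
    linear_combination ((n : k) - m) * hHt_n - q ^ (c * n) * hr_n

lemma expPolySpace_le_realizable_sup_polyFun [CharZero k] {q : k} (hq0 : q ≠ 0) (m : ℕ) :
    expPolySpace q m ≤ realizable q m ⊔ polyFun m := by
  induction m with
  | zero =>
    refine expPolySpace_le fun c j hj hc => Submodule.mem_sup_right ?_
    obtain rfl : c = 0 := by by_contra h; exact absurd (hc h) (Nat.not_lt_zero j)
    refine ⟨X ^ j, mem_degreeLT_succ_iff.mpr (by simpa using hj), ?_⟩
    ext n; simp [expMono]
  | succ m ih =>
    refine expPolySpace_le fun c j hj hc => ?_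
    rcases eq_or_ne c 0 with rfl | hc0
    · refine Submodule.mem_sup_right ⟨X ^ j, mem_degreeLT_succ_iff.mpr (by simpa using hj), ?_⟩
      ext n; simp [expMono]
    · convert evalNat_mul_expSeq_mem_realizable_sup_polyFun hq0 c ih (r := X ^ j)
        (mem_degreeLT_succ_iff.mpr (by simpa using Nat.lt_succ_iff.mp (hc hc0))) using 1
      ext n; simp [expMono, expSeq]

lemma expPolySpace_inf_vanishingBelow_le_realizable [CharZero k] {q : k} (hq0 : q ≠ 0) (m : ℕ) :
    expPolySpace q m ⊓ vanishingBelow m ≤ realizable q m :=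
  calc expPolySpace q m ⊓ vanishingBelow m
      ≤ (realizable q m ⊔ polyFun m) ⊓ vanishingBelow m :=
        inf_le_inf_right _ (expPolySpace_le_realizable_sup_polyFun hq0 m)
    _ = realizable q m ⊔ polyFun m ⊓ vanishingBelow m := sup_inf_assoc_of_le _ inf_le_left
    _ ≤ realizable q m := sup_le le_rfl (polyFun_inf_vanishingBelow_le q m)

lemma exists_eq_lowerOp_of_mem_closure {q : k} (hq0 : q ≠ 0) {W : Module.End k k[X]}
    (hW : W ∈ Submonoid.closure (Set.range (dq q))) :
    ∃ m, ∃ F ∈ expPolySpace q m ⊓ vanishingBelow m, W = lowerOp m F := by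
  induction hW using Submonoid.closure_induction_left with
  | one =>
    exact ⟨0, 1, ⟨one_mem_expPolySpace q 0, fun _ h => absurd h (Nat.not_lt_zero _)⟩,
      lowerOp_zero_one.symm⟩
  | mul_left _ hx _ _ ih =>
    obtain ⟨a, rfl⟩ := hx
    obtain ⟨m, F, hF, rfl⟩ := ih
    exact ⟨m + 1, _, ⟨mul_qNum_mem_expPolySpace hq0 a hF, mul_qNum_mem_vanishingBelow q a hF.2⟩,
      dq_mul_lowerOp q a m F⟩

lemma exists_commutator_eq_lowerOp_mul_sigma [CharZero k] {q : k} (hq0 : q ≠ 0)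
    (hq : ∀ c : ℤ, c ≠ 0 → q ^ c ≠ 1) (b : ℤ) {m : ℕ} {F : ℕ → k}
    (hF : F ∈ expPolySpace q m ⊓ vanishingBelow m) :
    ∃ Q ∈ qDiffAlg q, Q * lmul k X - lmul k X * Q = lowerOp m F * sigma q b := by
  set G := partialSum (expSeq q b * F)
  have hG : G ∈ expPolySpace q (m + 1) ⊓ vanishingBelow (m + 1) :=
    ⟨partialSum_expSeq_mul_mem_expPolySpace hq0 hq b hF.1,
      partialSum_mem_vanishingBelow_succ (mul_mem_vanishingBelow _ hF.2)⟩
  refine ⟨lowerOp (m + 1) G, (expPolySpace_inf_vanishingBelow_le_realizable hq0 _ hG).2, ?_⟩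
  rw [lowerOp_succ_mul_lmul_X_sub m G fun n hn => hG.2 n (Nat.lt_succ_of_le hn),
    lowerOp_mul_sigma]
  congr 1
  ext n
  simp [G, Finset.sum_range_succ]

lemma exists_commutator_eq_mul_sigma [CharZero k] {q : k} (hq0 : q ≠ 0)
    (hq : ∀ c : ℤ, c ≠ 0 → q ^ c ≠ 1) (b : ℤ) {P : Module.End k k[X]} (hP : P ∈ qDiffAlg q) :
    ∃ Q ∈ qDiffAlg q, Q * lmul k X - lmul k X * Q = P * sigma q b := by
  let D := LinearMap.mulRight k (lmul k X) - LinearMap.mulLeft k (lmul k X)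
  let S := ((qDiffAlg q).toSubmodule.map D).comap (LinearMap.mulRight k (sigma q b))
  suffices hS : (qDiffAlg q).toSubmodule ≤ S from hS hP
  rw [Algebra.adjoin_eq_span, Submodule.span_le]
  rintro _ hW
  obtain ⟨m, F, hF, rfl⟩ := exists_eq_lowerOp_of_mem_closure hq0 hW
  exact exists_commutator_eq_lowerOp_mul_sigma hq0 hq b hF

lemma lmul_commute (f g : k[X]) : Commute (lmul k f) (lmul k g) := by
  ext p; simp [lmul, mul_left_comm]

lemma zpow_ne_one_of_transcendental {R K : Type*} [CommRing R] [Nontrivial R] [Field K]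
    [Algebra R K] {x : K} (hx : Transcendental R x) {c : ℤ} (hc : c ≠ 0) : x ^ c ≠ 1 := by
  intro h
  have hn : x ^ c.natAbs = 1 := by
    rcases Int.natAbs_eq c with e | e <;> rw [e] at h
    · exact_mod_cast h
    · rwa [zpow_neg, inv_eq_one, zpow_natCast] at h
  exact hx.pow (Int.natAbs_pos.mpr hc) (hn ▸ isAlgebraic_one)

/-- Lemma L:intmono: for P in the subalgebra generated by the dq a
and any b, there is Q in the same subalgebra with [Q, lambda_x] = P ∘ sigma_b;
consequently [lambda_f ∘ Q, lambda_x] = lambda_f ∘ P ∘ sigma_b for every f. -/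
theorem stmt6 [CharZero k] (q : k) (hq : Transcendental ℚ q)
    (P : Module.End k k[X]) (hP : P ∈ Algebra.adjoin k (Set.range (dq q))) (b : ℤ) :
    ∃ Q ∈ Algebra.adjoin k (Set.range (dq q)),
      Q * lmul k X - lmul k X * Q = P * sigma q b ∧
      ∀ f : k[X],
        (lmul k f * Q) * lmul k X - lmul k X * (lmul k f * Q) = lmul k f * P * sigma q b := by
  have hq0 : q ≠ 0 := fun h => hq (h ▸ isAlgebraic_zero)
  obtain ⟨Q, hQ, hQP⟩ :=
    exists_commutator_eq_mul_sigma hq0 (fun _ => zpow_ne_one_of_transcendental hq) b hP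
  refine ⟨Q, hQ, hQP, fun f => ?_⟩
  rw [mul_assoc (lmul k f) P, ← hQP, mul_sub, mul_assoc, ← mul_assoc (lmul k X),
    (lmul_commute X f).eq, mul_assoc]

end QDiff1
end
end

section
/- The usual derivative ∂ does not belong to the k-subalgebra of End_k(R) generated by λ_x, ∂^β, and { σ_a : a ∈ ℤ } (this subalgebra is D_β·σ(Γ), where D_β is the k-subalgebra generated by λ_x and ∂^β). In particular, D_q ≠ D_β·σ(Γ). -/
open Polynomial

noncomputable section

namespace QDiff1

variable (k : Type*) [Field k]

variable {k}

/-!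
Every operator in the algebra generated by `λ_x`, `∂^β` and the `σ_a` acts on `x^b`, for all large
`b`, as `x^b ↦ ∑ᵢ cᵢ q^(nᵢ b) x^(b + dᵢ)` with finitely many terms. This shape is stable under sums
and under products, since `x^b ↦ c' q^(n' b) x^(b + d')` followed by `x^b ↦ c q^(n b) x^(b + d)` is
`x^b ↦ c c' q^(n d') q^((n + n') b) x^(b + d + d')`. For `∂` it would give `b = ∑ᵢ cᵢ q^(nᵢ b)` for
large `b`; taking differences in `b`, the Laurent polynomial `∑ᵢ cᵢ (q^nᵢ - 1) T^nᵢ`, which has no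
constant term, would take the value `1` at the infinitely many points `q^b`, so it would be `1`.
On the other side, `∂` is a `q`-differential operator of order `2`, through the Euler operator `x ∂`
of order `1`.
-/

open Filter
open scoped LaurentPolynomial

theorem tendsto_toNat_natCast_add_atTop (d : ℤ) :
    Tendsto (fun b : ℕ => ((b : ℤ) + d).toNat) atTop atTop :=
  tendsto_atTop_atTop.2 fun N => ⟨N + d.natAbs, fun b hb => by omega⟩

theorem not_isOfFinOrder_of_transcendental {R : Type*} [CommRing R] [Nontrivial R] [Algebra R k]
    {u : kˣ} (hu : Transcendental R (u : k)) : ¬IsOfFinOrder u := by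
  rw [isOfFinOrder_iff_pow_eq_one]
  rintro ⟨n, hn, hun⟩
  refine hu.pow hn ?_
  rw [← Units.val_pow_eq_pow_val, hun, Units.val_one]
  exact isAlgebraic_one

section Laurent

variable {u : kˣ}

theorem laurentPolynomial_eq_zero_of_eventually_eval₂_eq_zero (hu : ¬IsOfFinOrder u)
    {f : k[T;T⁻¹]} (h : ∀ᶠ b : ℕ in atTop, LaurentPolynomial.eval₂ (RingHom.id k) (u ^ b) f = 0) :
    f = 0 := by
  obtain ⟨N, hN⟩ := eventually_atTop.1 h
  obtain ⟨m, p, hp⟩ := f.exists_T_pow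
  have hroots : ∀ b : ℕ, p.IsRoot ((u ^ (N + b) : kˣ) : k) := fun b => by
    have := congrArg (LaurentPolynomial.eval₂ (RingHom.id k) (u ^ (N + b))) hp
    rwa [LaurentPolynomial.eval₂_toLaurent, Polynomial.eval₂_id, map_mul, hN _ le_self_add,
      zero_mul] at this
  have hinj : Function.Injective fun b : ℕ => ((u ^ (N + b) : kˣ) : k) :=
    Units.val_injective.comp <|
      (injective_pow_iff_not_isOfFinOrder.2 hu).comp (add_right_injective N)
  have hp0 : p = 0 :=
    p.eq_zero_of_infinite_isRoot (Set.infinite_of_injective_forall_mem hinj hroots)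
  rwa [hp0, map_zero, eq_comm, (LaurentPolynomial.isUnit_T _).mul_left_eq_zero] at hp

theorem not_eventually_sum_mul_zpow_eq_natCast {ι : Type*} [Fintype ι] (hu : ¬IsOfFinOrder u)
    (c : ι → k) (n : ι → ℤ) : ¬∀ᶠ b : ℕ in atTop, ∑ i, c i * (u : k) ^ (n i * b) = b := by
  intro h
  set P : k[T;T⁻¹] :=
    ∑ i, LaurentPolynomial.C (c i * ((u : k) ^ n i - 1)) * LaurentPolynomial.T (n i)
  have hP : ∀ᶠ b : ℕ in atTop, LaurentPolynomial.eval₂ (RingHom.id k) (u ^ b) (P - 1) = 0 := by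
    filter_upwards [h, (tendsto_add_atTop_nat 1).eventually h] with b hb hb1
    have hdiff : ∀ i, c i * ((u : k) ^ n i - 1) * ((u ^ b : kˣ) ^ n i : kˣ) =
        c i * (u : k) ^ (n i * ↑(b + 1)) - c i * (u : k) ^ (n i * b) := fun i => by
      rw [Units.val_zpow_eq_zpow_val, Units.val_pow_eq_pow_val, ← zpow_natCast, ← zpow_mul,
        Nat.cast_succ, mul_add, mul_one, zpow_add₀ u.ne_zero, mul_comm (b : ℤ)]
      ring
    simp only [P, map_sub, map_one, map_sum, map_mul, LaurentPolynomial.eval₂_C,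
      LaurentPolynomial.eval₂_T, RingHom.id_apply, hdiff, Finset.sum_sub_distrib, hb, hb1]
    push_cast
    ring
  have hP0 : P.coeff 0 = 0 := by
    simp only [P, AddMonoidAlgebra.coeff_sum, Finset.sum_apply']
    refine Finset.sum_eq_zero fun i _ => ?_
    rw [← LaurentPolynomial.single_eq_C_mul_T, AddMonoidAlgebra.coeff_single, Finsupp.single_apply]
    split_ifs with hi
    · rw [hi, zpow_zero, sub_self, mul_zero]
    · rfl
  have hP1 : P = 1 := sub_eq_zero.1 (laurentPolynomial_eq_zero_of_eventually_eval₂_eq_zero hu hP)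
  simp [hP1] at hP0

end Laurent

section ExpExpansion

variable (u : kˣ)

-- Only large `b` are constrained: this keeps the `toNat` from truncating and the shape stable
-- under products.
def HasExpExpansion {ι : Type*} [Fintype ι] (φ : Module.End k k[X]) (c : ι → k) (n d : ι → ℤ) :
    Prop :=
  ∀ᶠ b : ℕ in atTop, φ (X ^ b) = ∑ i, (c i * (u : k) ^ (n i * b)) • X ^ ((b : ℤ) + d i).toNat

variable {u} {ι κ : Type*} [Fintype ι] [Fintype κ] {φ ψ : Module.End k k[X]}
  {c : ι → k} {n d : ι → ℤ} {c' : κ → k} {n' d' : κ → ℤ}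

theorem HasExpExpansion.add (hφ : HasExpExpansion u φ c n d) (hψ : HasExpExpansion u ψ c' n' d') :
    HasExpExpansion u (φ + ψ) (Sum.elim c c') (Sum.elim n n') (Sum.elim d d') := by
  filter_upwards [hφ, hψ] with b hφb hψb
  rw [LinearMap.add_apply, hφb, hψb, Fintype.sum_sum_type]
  rfl

theorem HasExpExpansion.mul (hφ : HasExpExpansion u φ c n d) (hψ : HasExpExpansion u ψ c' n' d') :
    HasExpExpansion u (φ * ψ) (fun p : κ × ι => c' p.1 * c p.2 * (u : k) ^ (n p.2 * d' p.1))
      (fun p => n p.2 + n' p.1) (fun p => d p.2 + d' p.1) := by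
  have hshift : ∀ᶠ b : ℕ in atTop, ∀ j, 0 ≤ (b : ℤ) + d' j ∧
      φ (X ^ ((b : ℤ) + d' j).toNat) = ∑ i, (c i * (u : k) ^ (n i * ((b : ℤ) + d' j).toNat)) •
        X ^ ((((b : ℤ) + d' j).toNat : ℤ) + d i).toNat :=
    eventually_all.2 fun j =>
      (tendsto_toNat_natCast_add_atTop (d' j)).eventually (eventually_ge_atTop 1 |>.and hφ)
        |>.mono fun b hb => ⟨by omega, hb.2⟩
  filter_upwards [hψ, hshift] with b hψb hφb
  rw [Module.End.mul_apply, hψb, map_sum, Fintype.sum_prod_type]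
  refine Finset.sum_congr rfl fun j _ => ?_
  obtain ⟨hj0, hj⟩ := hφb j
  rw [map_smul, hj, Finset.smul_sum]
  refine Finset.sum_congr rfl fun i _ => ?_
  rw [smul_smul, Int.toNat_of_nonneg hj0, add_assoc, add_comm (d' j)]
  congr 1
  rw [mul_add, add_mul, zpow_add₀ u.ne_zero, zpow_add₀ u.ne_zero]
  ring

variable (u) in
theorem hasExpExpansion_algebraMap (r : k) :
    HasExpExpansion u (algebraMap k (Module.End k k[X]) r) (fun _ : Unit => r) (fun _ => 0)
      (fun _ => 0) :=
  Eventually.of_forall fun b => by simp [Module.algebraMap_end_apply]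

variable (u) in
def expPolySubalgebra : Subalgebra k (Module.End k k[X]) where
  carrier := {φ | ∃ (ι : Type) (_ : Fintype ι) (c : ι → k) (n d : ι → ℤ), HasExpExpansion u φ c n d}
  mul_mem' := by
    rintro φ ψ ⟨ι, _, c, n, d, hφ⟩ ⟨κ, _, c', n', d', hψ⟩
    exact ⟨_, _, _, _, _, hφ.mul hψ⟩
  add_mem' := by
    rintro φ ψ ⟨ι, _, c, n, d, hφ⟩ ⟨κ, _, c', n', d', hψ⟩
    exact ⟨_, _, _, _, _, hφ.add hψ⟩
  algebraMap_mem' r := ⟨_, _, _, _, _, hasExpExpansion_algebraMap u r⟩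
  zero_mem' := ⟨_, _, _, _, _, by simpa using hasExpExpansion_algebraMap u 0⟩
  one_mem' := ⟨_, _, _, _, _, by simpa using hasExpExpansion_algebraMap u 1⟩

theorem HasExpExpansion.mem_expPolySubalgebra {ι : Type} [Fintype ι] {c : ι → k} {n d : ι → ℤ}
    (h : HasExpExpansion u φ c n d) : φ ∈ expPolySubalgebra u :=
  ⟨ι, inferInstance, c, n, d, h⟩

end ExpExpansion

theorem dq_apply_X_pow (q : k) (a : ℤ) (b : ℕ) :
    dq q a (X ^ b) = (∑ i ∈ Finset.range b, q ^ (a * (i : ℤ))) • X ^ (b - 1) := by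
  have hb : (X : k[X]) ^ b = Polynomial.basisMonomials k b := by
    simp [Polynomial.coe_basisMonomials, X_pow_eq_monomial]
  rw [dq, hb, Module.Basis.constr_basis]

theorem End.ext_X_pow {f g : Module.End k k[X]} (h : ∀ b : ℕ, f (X ^ b) = g (X ^ b)) : f = g :=
  (Polynomial.basisMonomials k).ext fun b => by simpa [X_pow_eq_monomial] using h b

theorem dq_zero (q : k) : dq q 0 = derivative :=
  End.ext_X_pow fun b => by simp [dq_apply_X_pow, derivative_X_pow, smul_eq_C_mul]

section Generators

variable (u : kˣ)

theorem lmul_X_mem_expPolySubalgebra : lmul k X ∈ expPolySubalgebra u :=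
  HasExpExpansion.mem_expPolySubalgebra (c := fun _ : Unit => 1) (n := fun _ => 0)
    (d := fun _ => 1) <| Eventually.of_forall fun b => by
      simp [lmul, ← pow_succ', show ((b : ℤ) + 1).toNat = b + 1 by omega]

theorem sigma_mem_expPolySubalgebra (a : ℤ) : sigma (u : k) a ∈ expPolySubalgebra u :=
  HasExpExpansion.mem_expPolySubalgebra (c := fun _ : Unit => 1) (n := fun _ => a)
    (d := fun _ => 0) <| Eventually.of_forall fun b => by
      simp [sigma, ← smul_eq_C_mul, _root_.smul_pow, zpow_mul]

theorem dq_one_mem_expPolySubalgebra (hu : u ≠ 1) : dq (u : k) 1 ∈ expPolySubalgebra u := by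
  have hu1 : (u : k) ≠ 1 := Units.val_eq_one.not.2 hu
  refine HasExpExpansion.mem_expPolySubalgebra (c := ![((u : k) - 1)⁻¹, -((u : k) - 1)⁻¹])
    (n := ![1, 0]) (d := ![-1, -1]) (Eventually.of_forall fun b => ?_)
  have hgeom : ∑ i ∈ Finset.range b, (u : k) ^ (1 * (i : ℤ)) =
      ((u : k) - 1)⁻¹ * (u : k) ^ (1 * (b : ℤ)) + -((u : k) - 1)⁻¹ * (u : k) ^ (0 * (b : ℤ)) := by
    simp only [one_mul, zero_mul, zpow_natCast, zpow_zero, geom_sum_eq hu1]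
    ring
  simp only [dq_apply_X_pow, hgeom, add_smul, Fin.sum_univ_two, Matrix.cons_val_zero,
    Matrix.cons_val_one, show ((b : ℤ) + -1).toNat = b - 1 by omega]

theorem adjoin_le_expPolySubalgebra (hu : u ≠ 1) :
    Algebra.adjoin k (({lmul k X, dq (u : k) 1} : Set (Module.End k k[X])) ∪
      Set.range (sigma (u : k))) ≤ expPolySubalgebra u := by
  refine Algebra.adjoin_le ?_
  rintro φ ((rfl | rfl) | ⟨a, rfl⟩)
  · exact lmul_X_mem_expPolySubalgebra u
  · exact dq_one_mem_expPolySubalgebra u hu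
  · exact sigma_mem_expPolySubalgebra u a

end Generators

theorem derivative_notMem_expPolySubalgebra {u : kˣ} (hu : ¬IsOfFinOrder u) :
    derivative ∉ expPolySubalgebra u := by
  rintro ⟨ι, _, c, n, d, h⟩
  refine not_eventually_sum_mul_zpow_eq_natCast hu (fun i => if d i = -1 then c i else 0) n ?_
  filter_upwards [h, eventually_ge_atTop 2] with b hb hb2
  have := congrArg (coeff · (b - 1)) hb
  simp only [derivative_X_pow, coeff_C_mul_X_pow, if_pos, finsetSum_coeff, coeff_smul,
    coeff_X_pow, smul_eq_mul, mul_ite, mul_one, mul_zero] at this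
  rw [this]
  refine Finset.sum_congr rfl fun i _ => ?_
  by_cases hi : d i = -1
  · rw [if_pos hi, if_pos (by omega)]
  · rw [if_neg hi, if_neg (by omega), zero_mul]

section Dq

variable (q : k)

theorem closed_Dq : ∀ n, Closed (Dq q n)
  | 0 | _ + 1 => fun r s _ hφ => Submodule.mem_sInf.2 fun M hM =>
      hM.1 r s _ (Submodule.mem_sInf.1 hφ M hM)

theorem mem_Dq_zero {φ : Module.End k k[X]} (a : ℤ) (hφ : IsHomog a φ)
    (h : ∀ b : ℕ, φ * lmul k (X ^ b) = q ^ (a * (b : ℤ)) • (lmul k (X ^ b) * φ)) : φ ∈ Dq q 0 :=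
  Submodule.mem_sInf.2 fun _ hM => hM.2 ⟨a, hφ, h⟩

theorem mem_Dq_succ {n : ℕ} {φ : Module.End k k[X]} (a : ℤ) (hφ : IsHomog a φ)
    (h : ∀ b : ℕ, φ * lmul k (X ^ b) - q ^ (a * (b : ℤ)) • (lmul k (X ^ b) * φ) ∈ Dq q n) :
    φ ∈ Dq q (n + 1) :=
  Submodule.mem_sInf.2 fun _ hM => hM.2.2 ⟨a, hφ, h⟩

theorem Dq_le_succ (n : ℕ) : Dq q n ≤ Dq q (n + 1) :=
  le_sInf fun _ hM => hM.2.1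

theorem isHomog_of_apply_X_pow {φ : Module.End k k[X]} (a : ℤ) (c : ℕ → k)
    (h : ∀ b : ℕ, φ (X ^ b) = c b • X ^ (a + b).toNat) (hc : ∀ b : ℕ, a + b < 0 → c b = 0) :
    IsHomog a φ := fun b => ⟨c b, by
  split_ifs with hb
  · exact h b
  · rw [h b, hc b (by omega), zero_smul, zero_smul]⟩

theorem lmul_one : lmul k (1 : k[X]) = 1 :=
  LinearMap.mulLeft_one k k[X]

theorem lmul_mem_Dq_zero (r : k[X]) : lmul k r ∈ Dq q 0 := by
  have hone : (1 : Module.End k k[X]) ∈ Dq q 0 :=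
    mem_Dq_zero q 0 (isHomog_of_apply_X_pow 0 1 (fun b => by simp) (fun b hb => by omega))
      (fun b => by simp)
  simpa [lmul_one] using closed_Dq q 0 r 1 1 hone

variable (k) in
def euler : Module.End k k[X] := lmul k X * derivative

theorem X_mul_derivative_X_pow (b : ℕ) : X * derivative (X ^ b : k[X]) = C (b : k) * X ^ b := by
  rcases b with _ | b
  · simp
  · rw [derivative_X_pow, Nat.add_sub_cancel, mul_left_comm, ← pow_succ']

theorem euler_mem_Dq_one : euler k ∈ Dq q 1 := by
  refine mem_Dq_succ q 0
    (isHomog_of_apply_X_pow 0 (fun b => b) (fun b => ?_) (fun b hb => by omega)) (fun b => ?_)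
  · simp [euler, lmul, X_mul_derivative_X_pow, smul_eq_C_mul]
  · have hcomm : euler k * lmul k (X ^ b) - q ^ (0 * (b : ℤ)) • (lmul k (X ^ b) * euler k) =
        (b : k) • lmul k (X ^ b) := LinearMap.ext fun p => by
      simp only [euler, lmul, LinearMap.sub_apply, LinearMap.smul_apply, Module.End.mul_apply,
        LinearMap.mulLeft_apply, derivative_mul, zero_mul, zpow_zero, one_smul, smul_eq_C_mul]
      linear_combination p * X_mul_derivative_X_pow (k := k) b
    rw [hcomm]
    exact Submodule.smul_mem _ _ (lmul_mem_Dq_zero q _)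

theorem derivative_mem_Dq_two : derivative ∈ Dq q 2 := by
  refine mem_Dq_succ q (-1) (isHomog_of_apply_X_pow (-1) (fun b => b) (fun b => ?_)
    (fun b hb => by simp [show b = 0 by omega])) (fun b => ?_)
  · rcases b with _ | b
    · simp
    · simp [smul_eq_C_mul]
  · -- `∂ λ_{x^b} = λ_{x^b} ∂ + b λ_{x^(b-1)}`, and `λ_{x^b} ∂ = λ_{x^(b-1)} (x ∂)` once `b ≥ 1`
    have hcomm : derivative * lmul k (X ^ b) - q ^ (-1 * (b : ℤ)) • (lmul k (X ^ b) * derivative) =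
        (b : k) • lmul k (X ^ (b - 1)) +
          (1 - q ^ (-1 * (b : ℤ))) • (lmul k (X ^ (b - 1)) * euler k) := by
      refine LinearMap.ext fun p => ?_
      rcases b with _ | b
      · simp [lmul]
      · simp only [euler, lmul, LinearMap.sub_apply, LinearMap.add_apply, LinearMap.smul_apply,
          Module.End.mul_apply, LinearMap.mulLeft_apply, derivative_mul, derivative_X_pow,
          smul_eq_C_mul, Nat.add_sub_cancel, map_sub, map_one]
        push_cast
        ring
    rw [hcomm]
    refine Submodule.add_mem _ (Submodule.smul_mem _ _ (Dq_le_succ q 0 (lmul_mem_Dq_zero q _)))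
      (Submodule.smul_mem _ _ ?_)
    simpa [lmul_one] using closed_Dq q 1 (X ^ (b - 1)) 1 _ (euler_mem_Dq_one q)

end Dq

/-- Remark R:betasigma: the usual derivative is not in the subalgebra
generated by lambda_x, dq 1 and the sigma_a; in particular D_q ≠ D_β·σ(Γ). -/
theorem stmt8 [CharZero k] (q : k) (hq : Transcendental ℚ q) :
    dq q 0 ∉ Algebra.adjoin k (({lmul k X, dq q 1} : Set (Module.End k k[X])) ∪ Set.range (sigma q)) ∧
    {φ : Module.End k k[X] | ∃ n : ℕ, φ ∈ Dq q n} ≠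
      ↑(Algebra.adjoin k
        (({lmul k X, dq q 1} : Set (Module.End k k[X])) ∪ Set.range (sigma q))) := by
  obtain ⟨u, rfl⟩ : ∃ u : kˣ, (u : k) = q :=
    ⟨Units.mk0 q fun h => hq (h ▸ isAlgebraic_zero), rfl⟩
  have hu : ¬IsOfFinOrder u := not_isOfFinOrder_of_transcendental hq
  have hnotMem : dq (u : k) 0 ∉ Algebra.adjoin k
      (({lmul k X, dq (u : k) 1} : Set (Module.End k k[X])) ∪ Set.range (sigma (u : k))) := by
    rw [dq_zero]
    exact fun h => derivative_notMem_expPolySubalgebra hu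
      (adjoin_le_expPolySubalgebra u (fun h1 => hu (h1 ▸ IsOfFinOrder.one)) h)
  refine ⟨hnotMem, fun hEq => hnotMem ?_⟩
  have hmem : dq (u : k) 0 ∈ {φ : Module.End k k[X] | ∃ n : ℕ, φ ∈ Dq (u : k) n} :=
    ⟨2, dq_zero (u : k) ▸ derivative_mem_Dq_two (u : k)⟩
  rwa [hEq] at hmem

end QDiff1
end
end
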